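/- Let $(e^{tA})_{t \ge 0}$ be a bounded $C_0$-semigroup on a Banach space $E$ which is Abel ergodic with Abel ergodic projection $Q$. Then the semigroup is mean ergodic, its mean ergodic projection $P$ equals $Q$, and $\lim_{t \to \infty} \|e^{tA}\|/t = 0$. -/

import Mathlib

/-!
For `x = R(λ) f` one has `A x = λ x - f`, so integrating the derivative of the orbit of `x` gives
`T(t) x - x = ∫₀ᵗ T(s) (λ x - f) ds`. Multiplying by `λ` and letting `λ ↓ 0` shows that `Q f` is
fixed by the semigroup. Hence `C(r) f - Q f = C(r) (λ R(λ) f - Q f) - r⁻¹ (T(r) x - x)`: the first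
term has norm at most `M ‖λ R(λ) f - Q f‖`, small for small `λ`, and the second tends to `0` as
`r → ∞` because the semigroup is bounded.
-/

open Filter Topology

/-- `R` is the resolvent of the (unbounded) operator `A` at `lam`. -/
def IsResolventAt {E : Type*} [NormedAddCommGroup E] [NormedSpace ℝ E]
    (A : E →ₗ.[ℝ] E) (lam : ℝ) (R : E →L[ℝ] E) : Prop :=
  (∀ x : A.domain, R (lam • (x : E) - A x) = x) ∧
  (∀ f : E, ∃ h : R f ∈ A.domain, lam • R f - A ⟨R f, h⟩ = f)

open Set MeasureTheory

section

variable {E : Type*} [NormedAddCommGroup E] [NormedSpace ℝ E] {T : ℝ → E →L[ℝ] E}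

lemma intervalIntegrable_orbit (hTcont : ∀ f : E, ContinuousOn (fun t => T t f) (Ici 0))
    (f : E) {r : ℝ} (hr : 0 ≤ r) : IntervalIntegrable (fun s => T s f) volume 0 r :=
  ((hTcont f).mono (by simp [uIcc_of_le hr, Icc_subset_Ici_self])).intervalIntegrable

lemma norm_integral_orbit_le {M : ℝ} (hM : ∀ t ≥ (0 : ℝ), ‖T t‖ ≤ M) (f : E) {r : ℝ}
    (hr : 0 ≤ r) : ‖∫ s in (0 : ℝ)..r, T s f‖ ≤ M * ‖f‖ * r := by
  have := intervalIntegral.norm_integral_le_of_norm_le_const fun s hs =>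
    (T s).le_of_opNorm_le (hM s (uIoc_of_le hr ▸ hs).1.le) f
  rwa [sub_zero, abs_of_nonneg hr] at this

lemma hasDerivWithinAt_orbit {A : E →ₗ.[ℝ] E}
    (hTsemi : ∀ s t : ℝ, 0 ≤ s → 0 ≤ t → T (s + t) = (T s).comp (T t))
    (hgen : ∀ x : A.domain,
      Tendsto (fun h : ℝ => h⁻¹ • (T h (x : E) - (x : E))) (𝓝[>] 0) (𝓝 (A x)))
    (x : A.domain) {s : ℝ} (hs : 0 ≤ s) :
    HasDerivWithinAt (fun t => T t (x : E)) (T s (A x)) (Ioi s) s := by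
  rw [hasDerivWithinAt_iff_tendsto_slope' self_notMem_Ioi]
  have hshift : Tendsto (· - s) (𝓝[>] s) (𝓝[>] 0) := by
    have := (Filter.map_subRight_nhdsGT (c := s) (a := s)).le
    rwa [sub_self] at this
  refine ((((T s).continuous.tendsto _).comp (hgen x)).comp hshift).congr' ?_
  filter_upwards [self_mem_nhdsWithin] with y (hy : s < y)
  have hTy : T y (x : E) = T s (T (y - s) x) := by
    rw [← ContinuousLinearMap.comp_apply, ← hTsemi s _ hs (sub_pos.2 hy).le, add_sub_cancel]
  simp [slope_def_module, hTy]

lemma integral_orbit_generator [CompleteSpace E] {A : E →ₗ.[ℝ] E} (hT0 : T 0 = 1)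
    (hTsemi : ∀ s t : ℝ, 0 ≤ s → 0 ≤ t → T (s + t) = (T s).comp (T t))
    (hTcont : ∀ f : E, ContinuousOn (fun t => T t f) (Ici 0))
    (hgen : ∀ x : A.domain,
      Tendsto (fun h : ℝ => h⁻¹ • (T h (x : E) - (x : E))) (𝓝[>] 0) (𝓝 (A x)))
    (x : A.domain) {t : ℝ} (ht : 0 ≤ t) :
    ∫ s in (0 : ℝ)..t, T s (A x) = T t (x : E) - (x : E) := by
  rw [intervalIntegral.integral_eq_sub_of_hasDeriv_right_of_le ht
    ((hTcont x).mono Icc_subset_Ici_self)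
    (fun s hs => hasDerivWithinAt_orbit hTsemi hgen x hs.1.le)
    (intervalIntegrable_orbit hTcont _ ht), hT0]
  rfl

lemma IsResolventAt.orbit_sub_eq_integral [CompleteSpace E] {A : E →ₗ.[ℝ] E} {lam : ℝ}
    {R : E →L[ℝ] E} (hR : IsResolventAt A lam R) (hT0 : T 0 = 1)
    (hTsemi : ∀ s t : ℝ, 0 ≤ s → 0 ≤ t → T (s + t) = (T s).comp (T t))
    (hTcont : ∀ f : E, ContinuousOn (fun t => T t f) (Ici 0))
    (hgen : ∀ x : A.domain,
      Tendsto (fun h : ℝ => h⁻¹ • (T h (x : E) - (x : E))) (𝓝[>] 0) (𝓝 (A x)))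
    (f : E) {t : ℝ} (ht : 0 ≤ t) :
    T t (R f) - R f = ∫ s in (0 : ℝ)..t, T s (lam • R f - f) := by
  obtain ⟨hmem, hRf⟩ := hR.2 f
  have hA : A ⟨R f, hmem⟩ = lam • R f - f :=
    (sub_sub_cancel (lam • R f) _).symm.trans (congrArg (lam • R f - ·) hRf)
  rw [← hA, integral_orbit_generator hT0 hTsemi hTcont hgen ⟨R f, hmem⟩ ht]

lemma tendsto_of_forall_dist_le {α X : Type*} [PseudoMetricSpace X] {l : Filter α}
    {u : α → X} {y : X}
    (h : ∀ δ > 0, ∃ g : α → X, Tendsto g l (𝓝 y) ∧ ∀ᶠ a in l, dist (u a) (g a) ≤ δ) :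
    Tendsto u l (𝓝 y) := by
  refine Metric.tendsto_nhds.2 fun ε hε => ?_
  obtain ⟨g, hg, hug⟩ := h (ε / 2) (half_pos hε)
  filter_upwards [Metric.tendsto_nhds.1 hg (ε / 2) (half_pos hε), hug] with a hga hua
  linarith [dist_triangle (u a) (g a) y]

lemma tendsto_norm_div_atTop_zero {M : ℝ} (hM : ∀ t ≥ (0 : ℝ), ‖T t‖ ≤ M) :
    Tendsto (fun t => ‖T t‖ / t) atTop (𝓝 0) := by
  simp_rw [div_eq_mul_inv]
  refine isBoundedUnder_le_mul_tendsto_zero ?_ tendsto_inv_atTop_zero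
  exact ⟨M, eventually_map.2 <| (eventually_ge_atTop 0).mono fun t ht => by simpa using hM t ht⟩

lemma apply_eq_of_tendsto_smul_resolvent {M : ℝ} (hM : ∀ t ≥ (0 : ℝ), ‖T t‖ ≤ M)
    {R : ℝ → E →L[ℝ] E}
    (horbit : ∀ᶠ lam in 𝓝[>] 0, ∀ f : E, ∀ t ≥ (0 : ℝ),
      T t (R lam f) - R lam f = ∫ s in (0 : ℝ)..t, T s (lam • R lam f - f))
    {f q : E} (hq : Tendsto (fun lam : ℝ => lam • R lam f) (𝓝[>] 0) (𝓝 q))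
    {t : ℝ} (ht : 0 ≤ t) : T t q = q := by
  have hlim : Tendsto (fun lam : ℝ => T t (lam • R lam f) - lam • R lam f) (𝓝[>] 0)
      (𝓝 (T t q - q)) :=
    (((T t).continuous.tendsto q).comp hq).sub hq
  have hbound : Tendsto (fun lam : ℝ => lam * (M * ‖lam • R lam f - f‖ * t)) (𝓝[>] 0)
      (𝓝 (0 * (M * ‖q - f‖ * t))) :=
    (tendsto_nhdsWithin_of_tendsto_nhds tendsto_id).mul
      ((((hq.sub_const f).norm).const_mul M).mul_const t)
  have hzero : Tendsto (fun lam : ℝ => T t (lam • R lam f) - lam • R lam f) (𝓝[>] 0) (𝓝 0) := by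
    refine squeeze_zero_norm' ?_ (by simpa using hbound)
    filter_upwards [horbit, self_mem_nhdsWithin] with lam hlam (hpos : 0 < lam)
    rw [map_smul, ← smul_sub, hlam f t ht, norm_smul, Real.norm_of_nonneg hpos.le]
    exact mul_le_mul_of_nonneg_left (norm_integral_orbit_le hM _ ht) hpos.le
  exact sub_eq_zero.1 (tendsto_nhds_unique hlim hzero)

noncomputable def cesaroMean (T : ℝ → E →L[ℝ] E) (r : ℝ) (f : E) : E :=
  r⁻¹ • ∫ s in (0 : ℝ)..r, T s f

lemma cesaroMean_sub (hTcont : ∀ f : E, ContinuousOn (fun t => T t f) (Ici 0)) {r : ℝ}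
    (hr : 0 ≤ r) (f g : E) : cesaroMean T r (f - g) = cesaroMean T r f - cesaroMean T r g := by
  simp only [cesaroMean, map_sub, ← smul_sub,
    intervalIntegral.integral_sub (intervalIntegrable_orbit hTcont f hr)
      (intervalIntegrable_orbit hTcont g hr)]

lemma norm_cesaroMean_le {M : ℝ} (hM : ∀ t ≥ (0 : ℝ), ‖T t‖ ≤ M) {r : ℝ} (hr : 0 < r) (f : E) :
    ‖cesaroMean T r f‖ ≤ M * ‖f‖ := by
  rw [cesaroMean, norm_smul, norm_inv, Real.norm_of_nonneg hr.le, inv_mul_le_iff₀ hr, mul_comm r]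
  exact norm_integral_orbit_le hM f hr.le

lemma cesaroMean_of_forall_apply_eq [CompleteSpace E] {v : E} (hv : ∀ t ≥ (0 : ℝ), T t v = v)
    {r : ℝ} (hr : 0 < r) : cesaroMean T r v = v := by
  rw [cesaroMean, intervalIntegral.integral_congr (g := fun _ => v)
    (fun s hs => hv s (uIcc_of_le hr.le ▸ hs).1), intervalIntegral.integral_const, sub_zero,
    smul_smul, inv_mul_cancel₀ hr.ne', one_smul]

theorem tendsto_cesaroMean_of_tendsto_smul_resolvent [CompleteSpace E]
    (hTcont : ∀ f : E, ContinuousOn (fun t => T t f) (Ici 0))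
    {M : ℝ} (hM : ∀ t ≥ (0 : ℝ), ‖T t‖ ≤ M) {R : ℝ → E →L[ℝ] E}
    (horbit : ∀ᶠ lam in 𝓝[>] 0, ∀ f : E, ∀ t ≥ (0 : ℝ),
      T t (R lam f) - R lam f = ∫ s in (0 : ℝ)..t, T s (lam • R lam f - f))
    {f q : E} (hq : Tendsto (fun lam : ℝ => lam • R lam f) (𝓝[>] 0) (𝓝 q)) :
    Tendsto (fun r => cesaroMean T r f) atTop (𝓝 q) := by
  have hfix : ∀ t ≥ (0 : ℝ), T t q = q := fun t ht =>
    apply_eq_of_tendsto_smul_resolvent hM horbit hq ht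
  refine tendsto_of_forall_dist_le fun δ hδ => ?_
  have hclose : Tendsto (fun lam : ℝ => M * ‖lam • R lam f - q‖) (𝓝[>] 0) (𝓝 0) := by
    simpa using ((hq.sub_const q).norm).const_mul M
  obtain ⟨lam, hlam, hlamδ⟩ := (horbit.and (hclose.eventually (eventually_le_nhds hδ))).exists
  set x := R lam f
  have hbdd : IsBoundedUnder (· ≤ ·) atTop (fun r => ‖T r x - x‖) :=
    ⟨M * ‖x‖ + ‖x‖, eventually_map.2 <| (eventually_ge_atTop 0).mono fun r hr =>
      (norm_sub_le _ _).trans (by gcongr; exact (T r).le_of_opNorm_le (hM r hr) x)⟩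
  refine ⟨fun r => q - r⁻¹ • (T r x - x), ?_, ?_⟩
  · simpa using (tendsto_inv_atTop_zero.zero_smul_isBoundedUnder_le hbdd).const_sub q
  · filter_upwards [eventually_gt_atTop 0] with r hr
    have hsplit : cesaroMean T r f - (q - r⁻¹ • (T r x - x)) = cesaroMean T r (lam • x - q) := by
      rw [hlam f r hr.le]
      change _ - (q - cesaroMean T r _) = _
      rw [cesaroMean_sub hTcont hr.le, cesaroMean_sub hTcont hr.le,
        cesaroMean_of_forall_apply_eq hfix hr]
      abel
    rw [dist_eq_norm, hsplit]
    exact (norm_cesaroMean_le hM hr _).trans hlamδ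

end

theorem stmt15_general {E : Type*} [NormedAddCommGroup E] [NormedSpace ℝ E] [CompleteSpace E]
    (T : ℝ → E →L[ℝ] E)
    (hT0 : T 0 = 1)
    (hTsemi : ∀ s t : ℝ, 0 ≤ s → 0 ≤ t → T (s + t) = (T s).comp (T t))
    (hTcont : ∀ f : E, ContinuousOn (fun t => T t f) (Set.Ici 0))
    -- the semigroup is bounded:
    (hbdd : ∃ M : ℝ, ∀ t ≥ (0:ℝ), ‖T t‖ ≤ M)
    -- `A` is the generator of the semigroup:
    (A : E →ₗ.[ℝ] E)
    (hgen : ∀ x : A.domain,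
      Tendsto (fun h : ℝ => h⁻¹ • (T h (x : E) - (x : E))) (𝓝[>] 0) (𝓝 (A x)))
    -- Abel ergodicity: `(0, lam0) ⊆ ρ(A)`, `λ R(λ, A)` uniformly bounded near `0` and
    -- strongly convergent to the Abel ergodic projection `Q` as `λ ↓ 0`:
    (lam0 : ℝ) (hlam0 : 0 < lam0)
    (R : ℝ → E →L[ℝ] E)
    (hR : ∀ lam ∈ Set.Ioo 0 lam0, IsResolventAt A lam (R lam))
    (Q : E →L[ℝ] E)
    (habel : ∀ f : E, Tendsto (fun lam : ℝ => lam • R lam f) (𝓝[>] 0) (𝓝 (Q f))) :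
    -- mean ergodicity with mean ergodic projection `P = Q`:
    (∀ f : E, Tendsto (fun r : ℝ => r⁻¹ • ∫ s in (0:ℝ)..r, T s f) atTop (𝓝 (Q f))) ∧
    Tendsto (fun t : ℝ => ‖T t‖ / t) atTop (𝓝 0) := by
  obtain ⟨M, hM⟩ := hbdd
  have horbit : ∀ᶠ lam in 𝓝[>] 0, ∀ f : E, ∀ t ≥ (0 : ℝ),
      T t (R lam f) - R lam f = ∫ s in (0 : ℝ)..t, T s (lam • R lam f - f) := by
    filter_upwards [Ioo_mem_nhdsGT hlam0] with lam hlam f t ht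
    exact (hR lam hlam).orbit_sub_eq_integral hT0 hTsemi hTcont hgen f ht
  exact ⟨fun f => tendsto_cesaroMean_of_tendsto_smul_resolvent hTcont hM horbit (habel f),
    tendsto_norm_div_atTop_zero hM⟩

/-- A bounded `C₀`-semigroup which is Abel ergodic (with Abel ergodic projection `Q`) is
mean ergodic, its mean ergodic projection equals `Q`, and `‖e^{tA}‖/t → 0`. -/
theorem stmt15 {E : Type*} [NormedAddCommGroup E] [NormedSpace ℝ E] [CompleteSpace E]
    (T : ℝ → E →L[ℝ] E)
    (hT0 : T 0 = 1)
    (hTsemi : ∀ s t : ℝ, 0 ≤ s → 0 ≤ t → T (s + t) = (T s).comp (T t))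
    (hTcont : ∀ f : E, ContinuousOn (fun t => T t f) (Set.Ici 0))
    -- the semigroup is bounded:
    (hbdd : ∃ M : ℝ, ∀ t ≥ (0:ℝ), ‖T t‖ ≤ M)
    -- `A` is the generator of the semigroup:
    (A : E →ₗ.[ℝ] E)
    (hgen : ∀ x : A.domain,
      Tendsto (fun h : ℝ => h⁻¹ • (T h (x : E) - (x : E))) (𝓝[>] 0) (𝓝 (A x)))
    -- Abel ergodicity: `(0, lam0) ⊆ ρ(A)`, `λ R(λ, A)` uniformly bounded near `0` and
    -- strongly convergent to the Abel ergodic projection `Q` as `λ ↓ 0`: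
    (lam0 : ℝ) (hlam0 : 0 < lam0)
    (R : ℝ → E →L[ℝ] E)
    (hR : ∀ lam ∈ Set.Ioo 0 lam0, IsResolventAt A lam (R lam))
    (habelbdd : ∃ M : ℝ, ∀ lam ∈ Set.Ioo 0 lam0, ‖lam • R lam‖ ≤ M)
    (Q : E →L[ℝ] E)
    (habel : ∀ f : E, Tendsto (fun lam : ℝ => lam • R lam f) (𝓝[>] 0) (𝓝 (Q f))) :
    -- mean ergodicity with mean ergodic projection `P = Q`:
    (∀ f : E, Tendsto (fun r : ℝ => r⁻¹ • ∫ s in (0:ℝ)..r, T s f) atTop (𝓝 (Q f))) ∧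
    Tendsto (fun t : ℝ => ‖T t‖ / t) atTop (𝓝 0) :=
  stmt15_general T hT0 hTsemi hTcont hbdd A hgen lam0 hlam0 R hR Q habel
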